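/- Let ((X_i, Y_i))_{i ∈ ι} be a correlated family with parameter ρ, let ℓ ≥ 1 and n ≥ 1 be integers, let λ, μ ∈ ℝ, let v : ℤ/ℓℤ → ι be injective, and let c : ℤ/ℓℤ → {•,∘}. Let (N_i)_{i ∈ ℤ/ℓℤ} be integrable mean-zero real random variables such that the family consisting of all pairs (X_j, Y_j), j ∈ ι, together with all the N_i is jointly independent. For i ∈ ℤ/ℓℤ set A_i = (λ/√n)·X_{v(i)}X_{v(i+1)} + N_i if c(i) = •, and A_i = (μ/√n)·Y_{v(i)}Y_{v(i+1)} + N_i if c(i) = ∘. Then E[∏_{i ∈ ℤ/ℓℤ} A_i] = λ^{e} · μ^{ℓ−e} · ρ^{D} · n^{−ℓ/2}, where e = #{i : c(i) = •} and D = #{i ∈ ℤ/ℓℤ : c(i) ≠ c(i+1)}. (This is the computation E_ℙ[f_S] = Ξ(S)·n^{−ℓ/2} of the expected decorated-cycle statistic in the correlated spiked Wigner model, equation (eq-mean-Pb-f-S) in Lemma 3.1: all terms of the expansion containing at least one noise factor vanish by independence and centering.) -/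

import Mathlib

open MeasureTheory ProbabilityTheory

/-- A *correlated family with parameter `ρ`*: a family of `ℝ²`-valued random pairs
`(X i, Y i)`, `i : ι`, such that each `X i`, `Y i` is square-integrable with
`E[X i²] = E[Y i²] = 1` and `E[X i · Y i] = ρ`, and the pairs `(X i, Y i)` are mutually
independent as `ℝ × ℝ`-valued random variables. -/
structure CorrelatedFamily {Ω ι : Type*} [MeasurableSpace Ω] (P : Measure Ω)
    (X Y : ι → Ω → ℝ) (ρ : ℝ) : Prop where
  memLp_X : ∀ i, MemLp (X i) 2 P
  memLp_Y : ∀ i, MemLp (Y i) 2 P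
  secondMoment_X : ∀ i, ∫ ω, (X i ω) ^ 2 ∂P = 1
  secondMoment_Y : ∀ i, ∫ ω, (Y i ω) ^ 2 ∂P = 1
  correlation : ∀ i, ∫ ω, X i ω * Y i ω ∂P = ρ
  indep : iIndepFun (m := fun _ => inferInstance) (fun i ω => (X i ω, Y i ω)) P

/-- The family consisting of all the pairs `(X j, Y j)`, `j : ι`, together with all the
noise variables `N i`, `i : κ`, indexed by `ι ⊕ κ`. -/
def pairsWithNoise {Ω ι κ : Type*} (X Y : ι → Ω → ℝ) (N : κ → Ω → ℝ) :
    (k : ι ⊕ κ) → Ω → Sum.elim (fun _ : ι => ℝ × ℝ) (fun _ : κ => ℝ) k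
  | Sum.inl j => fun ω => (X j ω, Y j ω)
  | Sum.inr i => N i

/-- The corresponding family of codomain measurable-space structures. -/
def pairsWithNoiseSpace {ι κ : Type*} :
    (k : ι ⊕ κ) → MeasurableSpace (Sum.elim (fun _ : ι => ℝ × ℝ) (fun _ : κ => ℝ) k)
  | Sum.inl _ => inferInstanceAs (MeasurableSpace (ℝ × ℝ))
  | Sum.inr _ => inferInstanceAs (MeasurableSpace ℝ)

section Aux

variable {Ω : Type*} [MeasurableSpace Ω] {P : Measure Ω}

lemma aux_iIndepFun_ae_eq {ι' : Type*} {β : ι' → Type*} {m : ∀ i, MeasurableSpace (β i)}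
    {f g : ∀ i, Ω → β i} (hf : iIndepFun (m := m) f P) (h : ∀ i, f i =ᵐ[P] g i) :
    iIndepFun (m := m) g P := by
  rw [iIndepFun_iff_measure_inter_preimage_eq_mul] at hf ⊢
  intro S sets hsets
  have h1 : P (⋂ i ∈ S, g i ⁻¹' sets i) = P (⋂ i ∈ S, f i ⁻¹' sets i) := by
    apply measure_congr
    rw [Filter.eventuallyEq_set]
    have hae : ∀ᵐ ω ∂P, ∀ i ∈ S, f i ω = g i ω :=
      (ae_ball_iff S.countable_toSet).2 fun i _ => h i
    filter_upwards [hae] with ω hω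
    simp only [Set.mem_iInter, Set.mem_preimage]
    refine forall₂_congr fun i hi => ?_
    rw [hω i hi]
  rw [h1, hf S hsets]
  refine Finset.prod_congr rfl fun i hi => ?_
  apply measure_congr
  rw [Filter.eventuallyEq_set]
  filter_upwards [h i] with ω hω
  simp only [Set.mem_preimage]
  rw [hω]

lemma aux_integral_prod [IsProbabilityMeasure P] {ι' : Type*} {G : ι' → Ω → ℝ}
    (hG : iIndepFun (m := fun _ => inferInstance) G P) (hmeas : ∀ k, Measurable (G k))
    (T : Finset ι') (hint : ∀ k ∈ T, Integrable (G k) P) :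
    Integrable (fun ω => ∏ k ∈ T, G k ω) P ∧
      ∫ ω, ∏ k ∈ T, G k ω ∂P = ∏ k ∈ T, ∫ ω, G k ω ∂P := by
  classical
  induction T using Finset.induction_on with
  | empty => simp
  | @insert a T ha ih =>
    obtain ⟨ihInt, ihEq⟩ := ih fun k hk => hint k (Finset.mem_insert_of_mem hk)
    have ha' : Integrable (G a) P := hint a (Finset.mem_insert_self a T)
    have hfn : (∏ j ∈ T, G j) = fun ω => ∏ k ∈ T, G k ω := by
      funext ω; exact Finset.prod_apply ω T G
    have hIndep : IndepFun (G a) (fun ω => ∏ k ∈ T, G k ω) P := by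
      have := hG.indepFun_finsetProd_of_notMem hmeas ha
      rw [hfn] at this
      exact this.symm
    have hInt : Integrable (fun ω => G a ω * ∏ k ∈ T, G k ω) P :=
      hIndep.integrable_mul ha' ihInt
    constructor
    · refine hInt.congr (Filter.EventuallyEq.of_eq ?_)
      funext ω
      rw [Finset.prod_insert ha]
    · have := hIndep.integral_mul_eq_mul_integral ha'.1 ihInt.1
      simp only [Finset.prod_insert ha]
      rw [← ihEq, ← this]
      rfl

lemma aux_l2_mul [IsProbabilityMeasure P] {f g : Ω → ℝ} (hf : MemLp f 2 P) (hg : MemLp g 2 P) :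
    Integrable (fun ω => f ω * g ω) P := by
  have h := hg.smul (E := ℝ) (𝕜 := ℝ) hf (r := 1)
  rw [memLp_one_iff_integrable] at h
  exact h.congr (Filter.EventuallyEq.of_eq (funext fun ω => smul_eq_mul _ _))

end Aux

noncomputable def chiB (b : Bool) (p : ℝ × ℝ) : ℝ := if b then p.1 else p.2

lemma measurable_chiB (b : Bool) : Measurable (chiB b) := by
  cases b
  · exact measurable_snd
  · exact measurable_fst

noncomputable def PhiS {ℓ : ℕ} (c : ZMod ℓ → Bool) (S : Finset (ZMod ℓ)) (m : ZMod ℓ)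
    (p : ℝ × ℝ) : ℝ :=
  (if m - 1 ∈ S then chiB (c (m - 1)) p else 1) * (if m ∈ S then chiB (c m) p else 1)

lemma measurable_PhiS {ℓ : ℕ} (c : ZMod ℓ → Bool) (S : Finset (ZMod ℓ)) (m : ZMod ℓ) :
    Measurable (PhiS c S m) := by
  unfold PhiS
  apply Measurable.mul <;> split_ifs <;>
    first | exact measurable_chiB _ | exact measurable_const

open Classical in
noncomputable def psiS {ι : Type*} {ℓ : ℕ} (v : ZMod ℓ → ι) (c : ZMod ℓ → Bool)
    (S : Finset (ZMod ℓ)) (j : ι) : ℝ × ℝ → ℝ :=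
  if h : ∃ m, v m = j then PhiS c S h.choose else fun _ => 1

lemma measurable_psiS {ι : Type*} {ℓ : ℕ} (v : ZMod ℓ → ι) (c : ZMod ℓ → Bool)
    (S : Finset (ZMod ℓ)) (j : ι) : Measurable (psiS v c S j) := by
  unfold psiS
  split_ifs
  · exact measurable_PhiS _ _ _
  · exact measurable_const

lemma psiS_apply_v {ι : Type*} {ℓ : ℕ} {v : ZMod ℓ → ι} (hv : Function.Injective v)
    (c : ZMod ℓ → Bool) (S : Finset (ZMod ℓ)) (m : ZMod ℓ) :
    psiS v c S (v m) = PhiS c S m := by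
  unfold psiS
  have hex : ∃ m', v m' = v m := ⟨m, rfl⟩
  rw [dif_pos hex, hv hex.choose_spec]

noncomputable def phiS {ι : Type*} {ℓ : ℕ} (v : ZMod ℓ → ι) (c : ZMod ℓ → Bool)
    (S : Finset (ZMod ℓ)) :
    (k : ι ⊕ ZMod ℓ) → Sum.elim (fun _ : ι => ℝ × ℝ) (fun _ : ZMod ℓ => ℝ) k → ℝ
  | Sum.inl j => psiS v c S j
  | Sum.inr _ => id

lemma measurable_phiS {ι : Type*} {ℓ : ℕ} (v : ZMod ℓ → ι) (c : ZMod ℓ → Bool)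
    (S : Finset (ZMod ℓ)) (k : ι ⊕ ZMod ℓ) :
    @Measurable _ _ (pairsWithNoiseSpace k) _ (phiS v c S k) := by
  cases k with
  | inl j => exact measurable_psiS v c S j
  | inr i => exact measurable_id

lemma aux_cycle_prod {ℓ : ℕ} [NeZero ℓ] (c : ZMod ℓ → Bool) (S : Finset (ZMod ℓ))
    (r : ZMod ℓ → ℝ × ℝ) :
    ∏ m : ZMod ℓ, PhiS c S m (r m)
      = (∏ i ∈ S, chiB (c i) (r i)) * ∏ i ∈ S, chiB (c i) (r (i + 1)) := by
  classical
  unfold PhiS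
  rw [Finset.prod_mul_distrib, mul_comm]
  congr 1
  · rw [Finset.prod_ite_mem, Finset.univ_inter]
  · rw [← Fintype.prod_equiv (Equiv.addRight (1 : ZMod ℓ))
        (fun i => if i ∈ S then chiB (c i) (r (i + 1)) else 1)
        (fun m => if m - 1 ∈ S then chiB (c (m - 1)) (r m) else 1)
        (fun i => by simp [Equiv.coe_addRight, add_sub_cancel_right])]
    rw [Finset.prod_ite_mem, Finset.univ_inter]

/-- the computation `E_ℙ[f_S] = Ξ(S)·n^{−ℓ/2}`, equation (eq-mean-Pb-f-S) in
Lemma 3.1.  Let `((X i, Y i))_{i ∈ ι}` be a correlated family with parameter `ρ`, `ℓ ≥ 1`,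
`n ≥ 1`, `λ, μ ∈ ℝ`, `v : ℤ/ℓℤ → ι` injective, `c : ℤ/ℓℤ → {•,∘}` (`true = •`), and let
`(N i)` be integrable mean-zero noise variables such that all the pairs `(X j, Y j)`
together with all the `N i` form a jointly independent family.  With
`A i = (λ/√n)·X_{v i}X_{v(i+1)} + N i` for `c i = •` and
`A i = (μ/√n)·Y_{v i}Y_{v(i+1)} + N i` for `c i = ∘`, one has
`E[∏ i, A i] = λ^e · μ^{ℓ−e} · ρ^D · n^{−ℓ/2}`, where `e = #{i : c i = •}` and
`D = #{i : c i ≠ c (i+1)}`. -/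
theorem stmt6 {Ω ι : Type*} [MeasurableSpace Ω] (P : Measure Ω) [IsProbabilityMeasure P]
    (X Y : ι → Ω → ℝ) (ρ : ℝ) (hfam : CorrelatedFamily P X Y ρ)
    (ℓ : ℕ) [NeZero ℓ] (n : ℕ) (hn : 1 ≤ n) (lam mu : ℝ)
    (v : ZMod ℓ → ι) (hv : Function.Injective v) (c : ZMod ℓ → Bool)
    (N : ZMod ℓ → Ω → ℝ)
    (hNint : ∀ i, Integrable (N i) P) (hNmean : ∀ i, ∫ ω, N i ω ∂P = 0)
    (hindep : iIndepFun (m := pairsWithNoiseSpace) (pairsWithNoise X Y N) P)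
    (A : ZMod ℓ → Ω → ℝ)
    (hA : ∀ i ω, A i ω =
      if c i then lam / Real.sqrt n * (X (v i) ω * X (v (i + 1)) ω) + N i ω
      else mu / Real.sqrt n * (Y (v i) ω * Y (v (i + 1)) ω) + N i ω) :
    Integrable (fun ω => ∏ i : ZMod ℓ, A i ω) P ∧
    ∫ ω, (∏ i : ZMod ℓ, A i ω) ∂P
      = lam ^ (Finset.univ.filter fun i : ZMod ℓ => c i = true).card
        * mu ^ (ℓ - (Finset.univ.filter fun i : ZMod ℓ => c i = true).card)
        * ρ ^ (Finset.univ.filter fun i : ZMod ℓ => c i ≠ c (i + 1)).card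
        * (n : ℝ) ^ (-(ℓ : ℝ) / 2) := by
  classical
  obtain ⟨hLX, hLY, hMX, hMY, hcor, -⟩ := hfam
  set X' : ι → Ω → ℝ := fun j => (hLX j).1.mk (X j) with hX'
  set Y' : ι → Ω → ℝ := fun j => (hLY j).1.mk (Y j) with hY'
  set N' : ZMod ℓ → Ω → ℝ := fun i => (hNint i).1.mk (N i) with hN'
  have hXae : ∀ j, X j =ᵐ[P] X' j := fun j => (hLX j).1.ae_eq_mk
  have hYae : ∀ j, Y j =ᵐ[P] Y' j := fun j => (hLY j).1.ae_eq_mk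
  have hNae : ∀ i, N i =ᵐ[P] N' i := fun i => (hNint i).1.ae_eq_mk
  have hXmeas : ∀ j, Measurable (X' j) := fun j => (hLX j).1.stronglyMeasurable_mk.measurable
  have hYmeas : ∀ j, Measurable (Y' j) := fun j => (hLY j).1.stronglyMeasurable_mk.measurable
  have hNmeas : ∀ i, Measurable (N' i) := fun i => (hNint i).1.stronglyMeasurable_mk.measurable
  have hLX' : ∀ j, MemLp (X' j) 2 P := fun j => (hLX j).ae_eq (hXae j)
  have hLY' : ∀ j, MemLp (Y' j) 2 P := fun j => (hLY j).ae_eq (hYae j)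
  have hNint' : ∀ i, Integrable (N' i) P := fun i => (hNint i).congr (hNae i)
  have hNmean' : ∀ i, ∫ ω, N' i ω ∂P = 0 := fun i => by
    rw [← integral_congr_ae (hNae i)]; exact hNmean i
  have hindep' : iIndepFun (m := pairsWithNoiseSpace) (pairsWithNoise X' Y' N') P := by
    refine aux_iIndepFun_ae_eq hindep fun k => ?_
    cases k with
    | inl j =>
      filter_upwards [hXae j, hYae j] with ω h1 h2
      show (X j ω, Y j ω) = (X' j ω, Y' j ω)
      rw [h1, h2]
    | inr i => exact hNae i
  set q : ι → Ω → ℝ × ℝ := fun j ω => (X' j ω, Y' j ω) with hq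
  have hqmeas : ∀ j, Measurable (q j) := fun j => (hXmeas j).prodMk (hYmeas j)
  set G : Finset (ZMod ℓ) → (ι ⊕ ZMod ℓ) → Ω → ℝ :=
    fun S k => phiS v c S k ∘ pairsWithNoise X' Y' N' k with hG
  have hGindep : ∀ S, iIndepFun (m := fun _ => inferInstance) (G S) P :=
    fun S => hindep'.comp (phiS v c S) (measurable_phiS v c S)
  have hGmeas : ∀ S k, Measurable (G S k) := by
    intro S k
    cases k with
    | inl j => exact (measurable_psiS v c S j).comp (hqmeas j)
    | inr i => exact measurable_id.comp (hNmeas i)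
  have hGinl : ∀ S m ω, G S (Sum.inl (v m)) ω = PhiS c S m (q (v m) ω) := by
    intro S m ω
    show psiS v c S (v m) (q (v m) ω) = _
    rw [psiS_apply_v hv]
  have hGinr : ∀ S i, G S (Sum.inr i) = N' i := fun S i => rfl
  set T : Finset (ZMod ℓ) → Finset (ι ⊕ ZMod ℓ) :=
    fun S => (Finset.univ.image fun m => (Sum.inl (v m) : ι ⊕ ZMod ℓ)) ∪
      ((Finset.univ \ S).image Sum.inr) with hT
  have hGint : ∀ S, ∀ k ∈ T S, Integrable (G S k) P := by
    intro S k hk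
    rcases Finset.mem_union.1 hk with hk | hk
    · obtain ⟨m, -, rfl⟩ := Finset.mem_image.1 hk
      have heq : G S (Sum.inl (v m)) = fun ω => PhiS c S m (q (v m) ω) :=
        funext (hGinl S m)
      rw [heq]
      have hu : MemLp (fun ω => if m - 1 ∈ S then chiB (c (m - 1)) (q (v m) ω) else 1) 2 P := by
        by_cases h : m - 1 ∈ S
        · simp only [if_pos h]
          cases c (m - 1)
          · exact hLY' (v m)
          · exact hLX' (v m)
        · simp only [if_neg h]; exact memLp_const 1
      have hw : MemLp (fun ω => if m ∈ S then chiB (c m) (q (v m) ω) else 1) 2 P := by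
        by_cases h : m ∈ S
        · simp only [if_pos h]
          cases c m
          · exact hLY' (v m)
          · exact hLX' (v m)
        · simp only [if_neg h]; exact memLp_const 1
      exact aux_l2_mul hu hw
    · obtain ⟨i, -, rfl⟩ := Finset.mem_image.1 hk
      exact hNint' i
  set coef : ZMod ℓ → ℝ := fun i => (if c i then lam else mu) * (Real.sqrt n)⁻¹ with hcoef
  set Term : Finset (ZMod ℓ) → Ω → ℝ :=
    fun S ω => (∏ i ∈ S, coef i) * ∏ k ∈ T S, G S k ω with hTerm
  have hTermInt : ∀ S, Integrable (Term S) P := fun S =>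
    ((aux_integral_prod (hGindep S) (hGmeas S) (T S) (hGint S)).1.const_mul _)
  -- pointwise decomposition
  have hAae : ∀ᵐ ω ∂P, ∀ i : ZMod ℓ,
      A i ω = coef i * (chiB (c i) (q (v i) ω) * chiB (c i) (q (v (i + 1)) ω)) + N' i ω := by
    have h1 : ∀ᵐ ω ∂P, ∀ m : ZMod ℓ, X (v m) ω = X' (v m) ω :=
      ae_all_iff.2 fun m => hXae (v m)
    have h2 : ∀ᵐ ω ∂P, ∀ m : ZMod ℓ, Y (v m) ω = Y' (v m) ω :=
      ae_all_iff.2 fun m => hYae (v m)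
    have h3 : ∀ᵐ ω ∂P, ∀ i : ZMod ℓ, N i ω = N' i ω :=
      ae_all_iff.2 fun i => hNae i
    filter_upwards [h1, h2, h3] with ω e1 e2 e3 i
    rw [hA i ω, e3 i]
    rcases hc : c i
    · simp only [hc, Bool.false_eq_true, if_false, hcoef, hq, chiB]
      rw [e2 i, e2 (i + 1), div_eq_mul_inv]
    · simp only [hc, if_true, hcoef, hq, chiB]
      rw [e1 i, e1 (i + 1), div_eq_mul_inv]
  have hsum : (fun ω => ∏ i : ZMod ℓ, A i ω)
      =ᵐ[P] fun ω => ∑ S ∈ (Finset.univ : Finset (ZMod ℓ)).powerset, Term S ω := by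
    filter_upwards [hAae] with ω hω
    calc ∏ i : ZMod ℓ, A i ω
        = ∏ i : ZMod ℓ,
            (coef i * (chiB (c i) (q (v i) ω) * chiB (c i) (q (v (i + 1)) ω)) + N' i ω) :=
          Finset.prod_congr rfl fun i _ => hω i
      _ = ∑ S ∈ (Finset.univ : Finset (ZMod ℓ)).powerset,
            (∏ i ∈ S, coef i * (chiB (c i) (q (v i) ω) * chiB (c i) (q (v (i + 1)) ω)))
              * ∏ i ∈ Finset.univ \ S, N' i ω := Finset.prod_add _ _ _
      _ = ∑ S ∈ (Finset.univ : Finset (ZMod ℓ)).powerset, Term S ω := by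
          refine Finset.sum_congr rfl fun S hS => ?_
          have hdisj : Disjoint (Finset.univ.image fun m => (Sum.inl (v m) : ι ⊕ ZMod ℓ))
              ((Finset.univ \ S).image Sum.inr) := by
            simp [Finset.disjoint_left]
          have hinj1 : ∀ x ∈ (Finset.univ : Finset (ZMod ℓ)), ∀ y ∈ Finset.univ,
              (Sum.inl (v x) : ι ⊕ ZMod ℓ) = Sum.inl (v y) → x = y :=
            fun x _ y _ h => hv (Sum.inl.inj h)
          have hinj2 : ∀ x ∈ Finset.univ \ S, ∀ y ∈ Finset.univ \ S,
              (Sum.inr x : ι ⊕ ZMod ℓ) = Sum.inr y → x = y :=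
            fun x _ y _ h => Sum.inr.inj h
          have hTprod : ∏ k ∈ T S, G S k ω
              = (∏ m : ZMod ℓ, PhiS c S m (q (v m) ω)) * ∏ i ∈ Finset.univ \ S, N' i ω := by
            rw [hT]
            rw [Finset.prod_union hdisj, Finset.prod_image hinj1, Finset.prod_image hinj2]
            congr 1
            exact Finset.prod_congr rfl fun m _ => hGinl S m ω
          simp only [hTerm]
          have hchi : ∏ x ∈ S, chiB (c x) (q (v x) ω) * chiB (c x) (q (v (x + 1)) ω)
              = (∏ i ∈ S, chiB (c i) (q (v i) ω)) * ∏ i ∈ S, chiB (c i) (q (v (i + 1)) ω) :=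
            Finset.prod_mul_distrib
          rw [hTprod, Finset.prod_mul_distrib, hchi,
            aux_cycle_prod c S (fun m => q (v m) ω)]
          ring
  have hTotInt : Integrable (fun ω => ∏ i : ZMod ℓ, A i ω) P :=
    (integrable_finset_sum _ fun S _ => hTermInt S).congr hsum.symm
  refine ⟨hTotInt, ?_⟩
  rw [integral_congr_ae hsum, integral_finset_sum _ fun S _ => hTermInt S]
  have hTermVal : ∀ S, ∫ ω, Term S ω ∂P
      = (∏ i ∈ S, coef i) * ∏ k ∈ T S, ∫ ω, G S k ω ∂P := by
    intro S
    rw [hTerm]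
    rw [MeasureTheory.integral_const_mul,
      (aux_integral_prod (hGindep S) (hGmeas S) (T S) (hGint S)).2]
  rw [Finset.sum_eq_single Finset.univ
    (fun S hS hSne => by
      rw [hTermVal S]
      have : ∃ i, i ∉ S := by
        by_contra h
        push_neg at h
        exact hSne (Finset.eq_univ_iff_forall.2 h)
      obtain ⟨i, hi⟩ := this
      have hmem : (Sum.inr i : ι ⊕ ZMod ℓ) ∈ T S := by
        rw [hT]
        exact Finset.mem_union_right _
          (Finset.mem_image_of_mem _ (Finset.mem_sdiff.2 ⟨Finset.mem_univ _, hi⟩))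
      rw [Finset.prod_eq_zero hmem (by rw [hGinr]; exact hNmean' i), mul_zero])
    (fun h => absurd (Finset.mem_powerset_self _) h)]
  rw [hTermVal Finset.univ]
  have hTuniv : T Finset.univ = Finset.univ.image fun m => (Sum.inl (v m) : ι ⊕ ZMod ℓ) := by
    rw [hT]; simp
  rw [hTuniv, Finset.prod_image fun x _ y _ h => hv (Sum.inl.inj h)]
  have hval : ∀ m : ZMod ℓ, ∫ ω, G Finset.univ (Sum.inl (v m)) ω ∂P
      = if c (m - 1) = c m then (1 : ℝ) else ρ := by
    intro m
    have h1 : ∀ ω, G Finset.univ (Sum.inl (v m)) ω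
        = chiB (c (m - 1)) (q (v m) ω) * chiB (c m) (q (v m) ω) := by
      intro ω
      rw [hGinl]
      unfold PhiS
      simp
    simp only [h1, hq, chiB]
    rcases hcm1 : c (m - 1) <;> rcases hcm : c m <;>
      simp only [hcm1, hcm, if_true, if_false, Bool.false_eq_true]
    · -- false false : ∫ Y' Y' = 1
      rw [← hMY (v m)]
      apply integral_congr_ae
      filter_upwards [hYae (v m)] with ω h
      rw [← h, sq]
    · -- false true : ∫ Y' X' = ρ
      rw [← hcor (v m)]
      apply integral_congr_ae
      filter_upwards [hXae (v m), hYae (v m)] with ω hx hy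
      rw [← hx, ← hy, mul_comm]
    · -- true false : ∫ X' Y' = ρ
      rw [← hcor (v m)]
      apply integral_congr_ae
      filter_upwards [hXae (v m), hYae (v m)] with ω hx hy
      rw [← hx, ← hy]
    · -- true true : ∫ X' X' = 1
      rw [← hMX (v m)]
      apply integral_congr_ae
      filter_upwards [hXae (v m)] with ω h
      rw [← h, sq]
  rw [Finset.prod_congr rfl fun m _ => hval m, Finset.prod_ite, Finset.prod_const_one,
    Finset.prod_const, one_mul]
  have hcard : (Finset.univ.filter fun m : ZMod ℓ => ¬ (c (m - 1) = c m)).card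
      = (Finset.univ.filter fun i : ZMod ℓ => c i ≠ c (i + 1)).card := by
    apply Finset.card_bij (fun m _ => m - 1)
    · intro m hm
      simp only [Finset.mem_filter, Finset.mem_univ, true_and] at hm ⊢
      simpa [sub_add_cancel] using hm
    · intro m hm m' hm' h
      exact sub_left_injective h
    · intro i hi
      refine ⟨i + 1, ?_, by rw [add_sub_cancel_right]⟩
      simp only [Finset.mem_filter, Finset.mem_univ, true_and] at hi ⊢
      simpa [add_sub_cancel_right] using hi
  have hcoefuniv : ∏ i : ZMod ℓ, coef i
      = lam ^ (Finset.univ.filter fun i : ZMod ℓ => c i = true).card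
        * mu ^ (ℓ - (Finset.univ.filter fun i : ZMod ℓ => c i = true).card)
        * (n : ℝ) ^ (-(ℓ : ℝ) / 2) := by
    rw [hcoef]
    rw [Finset.prod_mul_distrib, Finset.prod_const, Finset.prod_ite, Finset.prod_const,
      Finset.prod_const, Finset.card_univ, ZMod.card]
    have hcards : (Finset.univ.filter fun i : ZMod ℓ => ¬ (c i = true)).card
        = ℓ - (Finset.univ.filter fun i : ZMod ℓ => c i = true).card := by
      have h := Finset.card_filter_add_card_filter_not
        (s := (Finset.univ : Finset (ZMod ℓ))) (p := fun i => c i = true)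
      rw [Finset.card_univ, ZMod.card] at h
      omega
    have hn0 : (0 : ℝ) ≤ n := Nat.cast_nonneg n
    have hpow : ((Real.sqrt n)⁻¹ : ℝ) ^ ℓ = (n : ℝ) ^ (-(ℓ : ℝ) / 2) := by
      rw [Real.sqrt_eq_rpow, ← Real.rpow_neg hn0, ← Real.rpow_natCast ((n:ℝ) ^ (-(1/2) : ℝ)) ℓ,
        ← Real.rpow_mul hn0]
      congr 1
      ring
    rw [hcards, hpow]
  rw [hcoefuniv, hcard]
  ring
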